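/- Under the stated hypotheses, the Hudson–Parthasarathy coefficient identity L₀₁ = −L̃† W̃ holds; explicitly, (−2/√γ)·[−iE₀₁ − E₀₁(γ/2 + iE₁₁)^{−1}E₁₁] = −(i√γ·(γ/2 + iE₁₁)^{−1}E₁₀)†·(γ/2 − iE₁₁)(γ/2 + iE₁₁)^{−1} = i√γ·E₀₁(γ/2 + iE₁₁)^{−1}. -/

import Mathlib

open ContinuousLinearMap

/-- The operator `γ/2 + iE₁₁`. -/
noncomputable def Aop {H : Type*} [NormedAddCommGroup H] [InnerProductSpace ℂ H]
    (γ : ℝ) (E11 : H →L[ℂ] H) : H →L[ℂ] H :=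
  ((γ / 2 : ℝ) : ℂ) • (1 : H →L[ℂ] H) + Complex.I • E11

/-- The operator `γ/2 − iE₁₁`. -/
noncomputable def Bop {H : Type*} [NormedAddCommGroup H] [InnerProductSpace ℂ H]
    (γ : ℝ) (E11 : H →L[ℂ] H) : H →L[ℂ] H :=
  ((γ / 2 : ℝ) : ℂ) • (1 : H →L[ℂ] H) - Complex.I • E11

/-!
Write `A = γ/2 + iE₁₁` and `Q = A⁻¹`. Since `E₁₁` is self-adjoint, `γ/2 − iE₁₁ = A†`, so
`(QE₁₀)†·A†Q = E₀₁(AQ)†Q = E₀₁Q`, which gives the second equality. For the first, `QA = 1` reads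
`QE₁₁ = −i(1 − (γ/2)Q)`, hence `−iE₀₁ − E₀₁QE₁₁ = −i(γ/2)E₀₁Q`, and `(−2/√γ)(−iγ/2) = i√γ`.
Invertibility of `A` is the Neumann series, as `‖iE₁₁‖ < γ/2`.
-/

section

variable {H : Type*} [NormedAddCommGroup H] [InnerProductSpace ℂ H] {γ : ℝ} {E : H →L[ℂ] H}

lemma isUnit_Aop [CompleteSpace H] (hE : ‖E‖ < γ / 2) : IsUnit (Aop γ E) := by
  have hres := spectrum.mem_resolventSet_of_norm_lt_mul (𝕜 := ℂ) (a := -(Complex.I • E))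
    (k := ((γ / 2 : ℝ) : ℂ)) <| calc
      ‖-(Complex.I • E)‖ * ‖(1 : H →L[ℂ] H)‖ ≤ ‖E‖ := by
        rw [norm_neg, norm_smul, Complex.norm_I, one_mul]
        exact mul_le_of_le_one_right (norm_nonneg E) norm_id_le
      _ < ‖((γ / 2 : ℝ) : ℂ)‖ := by
        rwa [Complex.norm_real, Real.norm_of_nonneg ((norm_nonneg E).trans hE.le)]
  simpa [resolventSet, Algebra.algebraMap_eq_smul_one, sub_eq_add_neg, Aop] using hres

lemma star_Aop [CompleteSpace H] (hE : IsSelfAdjoint E) : star (Aop γ E) = Bop γ E := by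
  simp [Aop, Bop, hE.star_eq, sub_eq_add_neg]

lemma inverse_Aop_mul (h : IsUnit (Aop γ E)) :
    Ring.inverse (Aop γ E) * E
      = (-Complex.I) • (1 - ((γ / 2 : ℝ) : ℂ) • Ring.inverse (Aop γ E)) := by
  have hI : Complex.I • (Ring.inverse (Aop γ E) * E)
      = 1 - ((γ / 2 : ℝ) : ℂ) • Ring.inverse (Aop γ E) := by
    rw [eq_sub_iff_add_eq, add_comm, ← Ring.inverse_mul_cancel _ h, Aop, mul_add, mul_smul_comm,
      mul_one, mul_smul_comm]
  rw [← hI, smul_smul, neg_mul, Complex.I_mul_I, neg_neg, one_smul]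

end

lemma star_inverse_mul_mul_star_mul_inverse {R : Type*} [Semiring R] [StarRing R] {a : R}
    (ha : IsUnit a) (x : R) :
    star (Ring.inverse a * x) * (star a * Ring.inverse a) = star x * Ring.inverse a := by
  rw [star_mul, ← Ring.inverse_star, mul_assoc, ← mul_assoc _ (star a),
    Ring.inverse_mul_cancel _ ha.star, one_mul]

theorem HP_coefficient_L01_general
    {H : Type*} [NormedAddCommGroup H] [InnerProductSpace ℂ H] [CompleteSpace H]
    (γ : ℝ) (E01 E10 E11 : H →L[ℂ] H)
    (h11 : adjoint E11 = E11) (h01 : adjoint E01 = E10)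
    (hnorm : ‖E11‖ < γ / 2) :
    ((-2 : ℂ) / (Real.sqrt γ : ℂ)) •
        ((-Complex.I) • E01 - E01 * Ring.inverse (Aop γ E11) * E11)
      = -(adjoint ((Complex.I * (Real.sqrt γ : ℂ)) • (Ring.inverse (Aop γ E11) * E10))) *
          (Bop γ E11 * Ring.inverse (Aop γ E11)) ∧
    -(adjoint ((Complex.I * (Real.sqrt γ : ℂ)) • (Ring.inverse (Aop γ E11) * E10))) *
          (Bop γ E11 * Ring.inverse (Aop γ E11))
      = (Complex.I * (Real.sqrt γ : ℂ)) • (E01 * Ring.inverse (Aop γ E11)) := by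
  have hA := isUnit_Aop hnorm
  set Q := Ring.inverse (Aop γ E11)
  have hB : Bop γ E11 = star (Aop γ E11) := (star_Aop (isSelfAdjoint_iff'.mpr h11)).symm
  have hright : -(adjoint ((Complex.I * (Real.sqrt γ : ℂ)) • (Q * E10))) * (Bop γ E11 * Q)
      = (Complex.I * (Real.sqrt γ : ℂ)) • (E01 * Q) := by
    rw [← star_eq_adjoint, star_smul, neg_mul, smul_mul_assoc, hB,
      star_inverse_mul_mul_star_mul_inverse hA, ← h01, ← star_eq_adjoint, star_star, ← neg_smul]
    congr 1
    simp [Complex.conj_ofReal]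
  refine ⟨?_, hright⟩
  have hE11 : E01 * Q * E11 = (-Complex.I) • (E01 - ((γ / 2 : ℝ) : ℂ) • (E01 * Q)) := by
    rw [mul_assoc, inverse_Aop_mul hA, mul_smul_comm, mul_sub, mul_one, mul_smul_comm]
  have hγ : 0 < γ := by linarith [norm_nonneg E11]
  have hs : (Real.sqrt γ : ℂ) ≠ 0 := by exact_mod_cast (Real.sqrt_pos.mpr hγ).ne'
  have hss : (Real.sqrt γ : ℂ) ^ 2 = γ := by exact_mod_cast Real.sq_sqrt hγ.le
  rw [hright, hE11]
  match_scalars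
  · ring
  · field_simp
    exact hss.symm

/-- Hudson–Parthasarathy coefficient identity `L₀₁ = −L̃†W̃`:
`(−2/√γ)·[−iE₀₁ − E₀₁(γ/2 + iE₁₁)⁻¹E₁₁]
  = −(i√γ·(γ/2 + iE₁₁)⁻¹E₁₀)†·(γ/2 − iE₁₁)(γ/2 + iE₁₁)⁻¹ = i√γ·E₀₁(γ/2 + iE₁₁)⁻¹`. -/
theorem HP_coefficient_L01
    {H : Type*} [NormedAddCommGroup H] [InnerProductSpace ℂ H] [CompleteSpace H]
    (γ : ℝ) (hγ : 0 < γ) (E00 E01 E10 E11 : H →L[ℂ] H)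
    (h00 : adjoint E00 = E00) (h11 : adjoint E11 = E11) (h01 : adjoint E01 = E10)
    (hnorm : ‖E11‖ < γ / 2) :
    ((-2 : ℂ) / (Real.sqrt γ : ℂ)) •
        ((-Complex.I) • E01 - E01 * Ring.inverse (Aop γ E11) * E11)
      = -(adjoint ((Complex.I * (Real.sqrt γ : ℂ)) • (Ring.inverse (Aop γ E11) * E10))) *
          (Bop γ E11 * Ring.inverse (Aop γ E11)) ∧
    -(adjoint ((Complex.I * (Real.sqrt γ : ℂ)) • (Ring.inverse (Aop γ E11) * E10))) *
          (Bop γ E11 * Ring.inverse (Aop γ E11))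
      = (Complex.I * (Real.sqrt γ : ℂ)) • (E01 * Ring.inverse (Aop γ E11)) :=
  HP_coefficient_L01_general γ E01 E10 E11 h11 h01 hnorm
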